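/- The map S : G/(id − γ_*)(G) → G_0 induced by (x_n)_n ↦ Σ_{n∈Z} α^n(x_n) is a well-defined group isomorphism, with inverse sending a ∈ G_0 to the class of the sequence supported at n = 0 with value a. -/

import Mathlib

/-!
`G₀` is a subring of the functions on `(0,1)` containing `α = t/(1-t)` and `α⁻¹`, so the finite
sum `S(x) = Σ αⁿ xₙ` lies in `G₀`, and `S` is additive. Reindexing gives `S ∘ γ₊ = S`, so `S`
vanishes on `(id - γ₊)(G)`. Conversely, if `S(w) = 0` and `w` is supported in `[L, M]`, the tail
sums `zₙ = Σ_{n ≤ k ≤ M} α^(k-n) w_k` satisfy `zₙ - α z_{n+1} = wₙ`; they vanish for `n > M`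
because the sum is empty, and for `n < L` because there `zₙ = α^(-n) S(w) = 0`.
-/

open scoped BigOperators

noncomputable section

/-- The open interval `(0,1)` on which the functions of `G₀ = ℤ[t,t⁻¹,(1-t)⁻¹]` live. -/
def I01 : Set ℝ := Set.Ioo 0 1

/-- Membership in `G₀ = ℤ[t,t⁻¹,(1-t)⁻¹]`, viewed as continuous functions on `(0,1)`:
`f ∈ G₀` iff `f(t) = p(t)/(tᵐ(1-t)ⁿ)` for some integer polynomial `p`. -/
def memG0 (f : I01 → ℝ) : Prop :=
  ∃ (p : Polynomial ℤ) (m n : ℕ),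
    ∀ t : I01, f t = (Polynomial.aeval (t : ℝ) p) / ((t : ℝ) ^ m * (1 - (t : ℝ)) ^ n)

/-- The positive cone `G_F⁺ = {f ∈ G₀ : f > 0 on F} ∪ {0}`. -/
def memGFp (F : Set ℝ) (f : I01 → ℝ) : Prop :=
  memG0 f ∧ ((∀ t : I01, (t : ℝ) ∈ F → 0 < f t) ∨ f = 0)

/-- Membership in `G = ⊕_{n ∈ ℤ} G₀` (finitely supported sequences of elements of `G₀`). -/
def memG (x : ℤ → I01 → ℝ) : Prop :=
  (∀ n : ℤ, memG0 (x n)) ∧ {n : ℤ | x n ≠ 0}.Finite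

/-- `Σ_{n ∈ ℤ} αⁿ(xₙ)(t)`, where `α` is multiplication by `t/(1-t)`. -/
def sumAlpha (x : ℤ → I01 → ℝ) (t : I01) : ℝ :=
  ∑ᶠ n : ℤ, ((t : ℝ) / (1 - (t : ℝ))) ^ n * x n t

/-- `Σ_{n ∈ ℤ} xₙ(t)`. -/
def sumPlain (x : ℤ → I01 → ℝ) (t : I01) : ℝ := ∑ᶠ n : ℤ, x n t

/-- The automorphism `γ₊ : G → G`, `γ₊((xₙ)ₙ) = (α(x_{n+1}))ₙ`. -/
def gammaStar (x : ℤ → I01 → ℝ) : ℤ → I01 → ℝ :=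
  fun n t => ((t : ℝ) / (1 - (t : ℝ))) * x (n + 1) t

/-- The positive cone `G⁺` of `G` determined by `F` and `F₁`. -/
def memGplus (F F1 : Set ℝ) (x : ℤ → I01 → ℝ) : Prop :=
  memG x ∧
    (((∀ t : I01, (t : ℝ) ∈ F → 0 < sumAlpha x t) ∧
      (∀ t : I01, (t : ℝ) ∈ F1 → 0 < sumPlain x t)) ∨ x = 0)

/-- The cone `G⁺⁺ = {0} ∪ {x ∈ G : Σₙ αⁿ(xₙ) > 0 on F}`. -/
def memGpp (F : Set ℝ) (x : ℤ → I01 → ℝ) : Prop :=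
  memG x ∧ ((∀ t : I01, (t : ℝ) ∈ F → 0 < sumAlpha x t) ∨ x = 0)

/-- The sequence in `G` supported at `n = 0` with value `a`. -/
def delta0 (a : I01 → ℝ) : ℤ → I01 → ℝ := fun n => if n = 0 then a else 0

open Finset Function Polynomial

section TailSum

variable {K : Type*} [DivisionRing K] (c : K) (x : ℤ → K) (M : ℤ)

def tailSum (n : ℤ) : K := ∑ k ∈ Icc n M, c ^ (k - n) * x k

variable {c x M}

lemma tailSum_of_lt {n : ℤ} (h : M < n) : tailSum c x M n = 0 := by
  simp [tailSum, Icc_eq_empty_of_lt h]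

lemma tailSum_sub_mul_tailSum_add_one (hc : c ≠ 0) (hx : ∀ k, M < k → x k = 0) (n : ℤ) :
    tailSum c x M n - c * tailSum c x M (n + 1) = x n := by
  rcases le_or_gt n M with hn | hn
  · have hshift : c * tailSum c x M (n + 1) = ∑ k ∈ Icc (n + 1) M, c ^ (k - n) * x k := by
      rw [tailSum, mul_sum]
      refine sum_congr rfl fun k _ => ?_
      rw [← mul_assoc, ← zpow_one_add₀ hc]
      ring_nf
    rw [hshift, tailSum, ← insert_Icc_add_one_left_eq_Icc hn,
      sum_insert (by simp), sub_self, zpow_zero, one_mul, add_sub_cancel_right]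
  · rw [tailSum_of_lt hn, tailSum_of_lt (by omega), hx n hn, mul_zero, sub_zero]

lemma tailSum_eq_zero (hc : c ≠ 0) {n : ℤ} (h : ∑ k ∈ Icc n M, c ^ k * x k = 0) :
    tailSum c x M n = 0 := by
  have hfactor : tailSum c x M n = c ^ (-n) * ∑ k ∈ Icc n M, c ^ k * x k := by
    rw [tailSum, mul_sum]
    refine sum_congr rfl fun k _ => ?_
    rw [← mul_assoc, ← zpow_add₀ hc, neg_add_eq_sub]
  rw [hfactor, h, mul_zero]

end TailSum

def alpha : I01 → ℝ := fun t => t / (1 - t)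

lemma alpha_ne_zero (t : I01) : alpha t ≠ 0 :=
  div_ne_zero t.2.1.ne' (sub_ne_zero.2 t.2.2.ne')

def G0 : Subring (I01 → ℝ) where
  carrier := {f | memG0 f}
  zero_mem' := ⟨0, 0, 0, by simp⟩
  one_mem' := ⟨1, 0, 0, by simp⟩
  neg_mem' := by
    rintro f ⟨p, m, n, hp⟩
    exact ⟨-p, m, n, fun t => by simp [hp t, neg_div]⟩
  add_mem' := by
    rintro f g ⟨p, m, n, hp⟩ ⟨q, m', n', hq⟩
    refine ⟨p * X ^ m' * (1 - X) ^ n' + q * X ^ m * (1 - X) ^ n, m + m', n + n', fun t => ?_⟩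
    have ht : (t : ℝ) ≠ 0 := t.2.1.ne'
    have ht' : 1 - (t : ℝ) ≠ 0 := sub_ne_zero.2 t.2.2.ne'
    simp only [Pi.add_apply, hp t, hq t, map_add, map_mul, map_pow, map_sub, map_one, aeval_X]
    field_simp
    ring
  mul_mem' := by
    rintro f g ⟨p, m, n, hp⟩ ⟨q, m', n', hq⟩
    refine ⟨p * q, m + m', n + n', fun t => ?_⟩
    simp only [Pi.mul_apply, hp t, hq t, map_mul]
    ring

lemma alpha_zpow_mem_G0 (k : ℤ) : alpha ^ k ∈ G0 := by
  have h : alpha ∈ G0 := ⟨X, 0, 1, fun t => by simp [alpha]⟩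
  have hinv : alpha⁻¹ ∈ G0 := ⟨1 - X, 1, 0, fun t => by simp [alpha]⟩
  cases k with
  | ofNat j => simpa using pow_mem h j
  | negSucc j => simpa [zpow_negSucc, inv_pow] using pow_mem hinv (j + 1)

lemma sumAlpha_eq_sum {x : ℤ → I01 → ℝ} {s : Finset ℤ} (hs : support x ⊆ s) (t : I01) :
    sumAlpha x t = ∑ n ∈ s, alpha t ^ n * x n t :=
  finsum_eq_sum_of_support_subset _ fun n hn => hs fun hxn => hn (by simp [hxn])

lemma sumAlpha_mem_G0 {x : ℤ → I01 → ℝ} (hx : memG x) : sumAlpha x ∈ G0 := by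
  have hsum : sumAlpha x = ∑ n ∈ hx.2.toFinset, alpha ^ n * x n := by
    funext t
    rw [sumAlpha_eq_sum hx.2.coe_toFinset.ge t, Finset.sum_apply]
    rfl
  rw [hsum]
  exact sum_mem fun n _ => mul_mem (alpha_zpow_mem_G0 n) (hx.1 n)

lemma hasFiniteSupport_sumAlpha_summand {x : ℤ → I01 → ℝ} (hx : x.HasFiniteSupport) (t : I01) :
    (fun n => alpha t ^ n * x n t).HasFiniteSupport :=
  HasFiniteSupport.mul_right _ (HasFiniteSupport.fun_comp (g := fun f : I01 → ℝ => f t) hx rfl)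

lemma sumAlpha_add {x y : ℤ → I01 → ℝ} (hx : x.HasFiniteSupport) (hy : y.HasFiniteSupport) :
    sumAlpha (x + y) = sumAlpha x + sumAlpha y := by
  funext t
  simp only [sumAlpha, Pi.add_apply, mul_add]
  exact finsum_add_distrib (hasFiniteSupport_sumAlpha_summand hx t)
    (hasFiniteSupport_sumAlpha_summand hy t)

lemma sumAlpha_sub {x y : ℤ → I01 → ℝ} (hx : x.HasFiniteSupport) (hy : y.HasFiniteSupport) :
    sumAlpha (x - y) = sumAlpha x - sumAlpha y := by
  funext t
  simp only [sumAlpha, Pi.sub_apply, mul_sub]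
  exact finsum_sub_distrib (hasFiniteSupport_sumAlpha_summand hx t)
    (hasFiniteSupport_sumAlpha_summand hy t)

lemma sumAlpha_gammaStar (z : ℤ → I01 → ℝ) : sumAlpha (gammaStar z) = sumAlpha z := by
  funext t
  rw [sumAlpha, sumAlpha]
  conv_rhs => rw [← finsum_comp_equiv (Equiv.addRight 1)]
  refine finsum_congr fun n => ?_
  show alpha t ^ n * (alpha t * z (n + 1) t) = alpha t ^ (n + 1) * z (n + 1) t
  rw [zpow_add_one₀ (alpha_ne_zero t), mul_assoc]

lemma hasFiniteSupport_gammaStar {z : ℤ → I01 → ℝ} (hz : z.HasFiniteSupport) :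
    (gammaStar z).HasFiniteSupport :=
  (hz.comp_of_injective (add_left_injective 1)).comp (g := (alpha * ·)) (mul_zero _)

lemma sumAlpha_sub_gammaStar {z : ℤ → I01 → ℝ} (hz : z.HasFiniteSupport) :
    sumAlpha (z - gammaStar z) = 0 := by
  rw [sumAlpha_sub hz (hasFiniteSupport_gammaStar hz), sumAlpha_gammaStar, sub_self]

lemma memG.sub {x y : ℤ → I01 → ℝ} (hx : memG x) (hy : memG y) : memG (x - y) :=
  ⟨fun n => show x n - y n ∈ G0 from sub_mem (hx.1 n) (hy.1 n), HasFiniteSupport.sub hx.2 hy.2⟩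

lemma exists_memG_eq_sub_gammaStar {w : ℤ → I01 → ℝ} (hw : memG w) (h : sumAlpha w = 0) :
    ∃ z, memG z ∧ w = z - gammaStar z := by
  obtain ⟨L, hL⟩ := hw.2.bddBelow
  obtain ⟨M, hM⟩ := hw.2.bddAbove
  have hw_Icc : ∀ n ≤ L, support w ⊆ (Icc n M : Finset ℤ) := fun n hn k hk =>
    mem_Icc.2 ⟨hn.trans (hL hk), hM hk⟩
  let z : ℤ → I01 → ℝ := fun n t => tailSum (alpha t) (fun k => w k t) M n
  refine ⟨z, ⟨fun n => ?_, ?_⟩, ?_⟩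
  · have hz : z n = ∑ k ∈ Icc n M, alpha ^ (k - n) * w k := by
      funext t
      rw [Finset.sum_apply]
      rfl
    rw [hz]
    exact sum_mem fun k _ => mul_mem (alpha_zpow_mem_G0 _) (hw.1 k)
  · refine (Set.finite_Icc L M).subset fun n hn => ?_
    by_contra hout
    apply hn
    funext t
    rcases lt_or_ge n L with hnL | hLn
    · refine tailSum_eq_zero (alpha_ne_zero t) ?_
      rw [← sumAlpha_eq_sum (hw_Icc n hnL.le), h, Pi.zero_apply]
    · exact tailSum_of_lt (not_le.1 fun hnM => hout ⟨hLn, hnM⟩)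
  · funext n t
    refine (tailSum_sub_mul_tailSum_add_one (x := fun k => w k t) (alpha_ne_zero t)
      (fun k hk => ?_) n).symm
    have hwk : w k = 0 := not_not.1 fun hk' => not_lt.2 (hM hk') hk
    simp [hwk]

lemma sumAlpha_eq_zero_iff {w : ℤ → I01 → ℝ} (hw : memG w) :
    sumAlpha w = 0 ↔ ∃ z, memG z ∧ w = z - gammaStar z := by
  refine ⟨exists_memG_eq_sub_gammaStar hw, ?_⟩
  rintro ⟨z, hz, rfl⟩
  exact sumAlpha_sub_gammaStar hz.2

lemma memG_delta0 {a : I01 → ℝ} (ha : memG0 a) : memG (delta0 a) := by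
  refine ⟨fun n => ?_, (Set.finite_singleton 0).subset fun n hn => ?_⟩
  · unfold delta0
    split_ifs
    exacts [ha, G0.zero_mem]
  · by_contra h
    exact hn (if_neg h)

lemma sumAlpha_delta0 (a : I01 → ℝ) : sumAlpha (delta0 a) = a := by
  funext t
  rw [sumAlpha, finsum_eq_single _ 0 fun n hn => by simp [delta0, hn]]
  simp [delta0]

/-- the map induced by `x ↦ Σₙ αⁿ(xₙ)` is a well-defined group isomorphism
`S : G/(id - γ₊)(G) → G₀`, with inverse `a ↦ [delta0 a]`. -/
theorem stmt10 :
    (∀ x : ℤ → I01 → ℝ, memG x → memG0 (sumAlpha x)) ∧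
    (∀ x y : ℤ → I01 → ℝ, memG x → memG y → sumAlpha (x + y) = sumAlpha x + sumAlpha y) ∧
    (∀ x y : ℤ → I01 → ℝ, memG x → memG y →
      (sumAlpha x = sumAlpha y ↔ ∃ z : ℤ → I01 → ℝ, memG z ∧ x - y = z - gammaStar z)) ∧
    (∀ a : I01 → ℝ, memG0 a → memG (delta0 a) ∧ sumAlpha (delta0 a) = a) := by
  refine ⟨fun x hx => sumAlpha_mem_G0 hx, fun x y hx hy => sumAlpha_add hx.2 hy.2,
    fun x y hx hy => ?_, fun a ha => ⟨memG_delta0 ha, sumAlpha_delta0 a⟩⟩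
  rw [← sub_eq_zero, ← sumAlpha_sub hx.2 hy.2]
  exact sumAlpha_eq_zero_iff (hx.sub hy)

end
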